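/- Let P be a nonsymmetric operad with multiplication π. The map ρ : P_{m+1} × P_n → P_{m+n}, ρ(f)φ := ι_f φ, defines an action of the Gerstenhaber–Voronov graded Lie algebra (P_{•+1}, [·,·]_GV) on the cup Lie algebra (P_•, [·,·]_π): ρ([f,g]_GV)(φ) = ρ(f)ρ(g)φ − (-1)^{mn}ρ(g)ρ(f)φ, and ρ(f)[φ,ψ]_π = [ρ(f)φ, ψ]_π + (-1)^{mk}[φ, ρ(f)ψ]_π for f ∈ P_{m+1}, g ∈ P_{n+1}, φ ∈ P_k, ψ ∈ P_l. -/

import Mathlib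

/-- A nonsymmetric operad (in "arity minus one" indexing: `Q n` is the space of
operations of arity `n + 1`, i.e. the space `P_{n+1}` of the paper), given by a
collection of `k`-modules with partial compositions
`∘ᵢ : P_{m+1} × P_{n+1} → P_{m+n+1}` (here `i : Fin (m+1)` is the 0-based
position), satisfying the sequential and parallel associativity axioms and
unit axioms.  The target degree is a free variable `p` constrained by
`m + n = p`, which avoids dependent-type casts in the axioms. -/
structure NSOperad (k : Type*) [Field k] (Q : ℕ → Type*)
    [∀ n, AddCommGroup (Q n)] [∀ n, Module k (Q n)] where
  comp : ∀ {m n p : ℕ}, m + n = p → Q m → Fin (m + 1) → Q n → Q p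
  comp_add_left : ∀ {m n p : ℕ} (h : m + n = p) (f f' : Q m) (i : Fin (m + 1)) (g : Q n),
    comp h (f + f') i g = comp h f i g + comp h f' i g
  comp_add_right : ∀ {m n p : ℕ} (h : m + n = p) (f : Q m) (i : Fin (m + 1)) (g g' : Q n),
    comp h f i (g + g') = comp h f i g + comp h f i g'
  comp_smul_left : ∀ {m n p : ℕ} (h : m + n = p) (a : k) (f : Q m) (i : Fin (m + 1)) (g : Q n),
    comp h (a • f) i g = a • comp h f i g
  comp_smul_right : ∀ {m n p : ℕ} (h : m + n = p) (a : k) (f : Q m) (i : Fin (m + 1)) (g : Q n),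
    comp h f i (a • g) = a • comp h f i g
  one : Q 0
  comp_one : ∀ {m : ℕ} (f : Q m) (i : Fin (m + 1)), comp (Nat.add_zero m) f i one = f
  one_comp : ∀ {m : ℕ} (f : Q m), comp (Nat.zero_add m) one 0 f = f
  assoc_seq : ∀ {m n l q r p : ℕ} (h0 : n + l = q) (h1 : m + q = p) (h2 : m + n = r)
    (h3 : r + l = p) (f : Q m) (g : Q n) (hh : Q l) (i : Fin (m + 1)) (j : Fin (n + 1)),
    comp h1 f i (comp h0 g j hh) =
      comp h3 (comp h2 f i g) ⟨(i : ℕ) + (j : ℕ), by have := i.isLt; have := j.isLt; omega⟩ hh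
  assoc_par : ∀ {m n l r s p : ℕ} (h2 : m + n = r) (h3 : r + l = p) (h4 : m + l = s)
    (h5 : s + n = p) (f : Q m) (g : Q n) (hh : Q l) (i j : Fin (m + 1)), (i : ℕ) < (j : ℕ) →
    comp h3 (comp h2 f i g) ⟨(j : ℕ) + n, by have := j.isLt; omega⟩ hh =
      comp h5 (comp h4 f j hh) ⟨(i : ℕ), by have := i.isLt; omega⟩ g

namespace NSOperad

variable {k : Type*} [Field k] {Q : ℕ → Type*}
  [∀ n, AddCommGroup (Q n)] [∀ n, Module k (Q n)]

/-- Transport along an equality of degrees. -/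
def tr {i j : ℕ} (h : i = j) (x : Q i) : Q j := h ▸ x

variable (O : NSOperad k Q)

/-- The contraction operator `ι_g f := Σᵢ (-1)^{(i-1)(n-1)} f ∘ᵢ g`
(for `f ∈ P_{m+1}`, `g ∈ P_{n+1}` in paper degrees). -/
def iota {m n : ℕ} (g : Q n) (f : Q m) : Q (m + n) :=
  ∑ i : Fin (m + 1), ((-1 : k) ^ ((i : ℕ) * n)) • O.comp rfl f i g

/-- `π ∈ P_2` is a multiplication if `π ∘₁ π = π ∘₂ π`. -/
def IsMult (π : Q 1) : Prop := O.comp rfl π 0 π = O.comp rfl π 1 π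

/-- The Gerstenhaber–Voronov bracket `[f,g]_GV = ι_f g − (-1)^{mn} ι_g f`. -/
def gv {m n : ℕ} (f : Q m) (g : Q n) : Q (m + n) :=
  tr (by omega : n + m = m + n) (O.iota f g) - ((-1 : k) ^ (m * n)) • O.iota g f

/-- The differential `δ_π f := −[π, f]_GV`. -/
def delta (π : Q 1) {n : ℕ} (f : Q n) : Q (n + 1) :=
  - tr (by omega : 1 + n = n + 1) (O.gv π f)

/-- The map `θ f := −ι_f π`. -/
def theta (π : Q 1) {n : ℕ} (f : Q n) : Q (n + 1) :=
  - tr (by omega : 1 + n = n + 1) (O.iota f π)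

/-- The map `D f := −ι_π f`. -/
def Dop (π : Q 1) {n : ℕ} (f : Q n) : Q (n + 1) := - O.iota π f

/-- The cup product `f ∪_π g := (π ∘₂ g) ∘₁ f`. -/
def cup (π : Q 1) {m n : ℕ} (f : Q m) (g : Q n) : Q (m + n + 1) :=
  O.comp (by omega : (1 + n) + m = m + n + 1) (O.comp rfl π 1 g) 0 f

/-- The cup bracket `[f,g]_π := f ∪_π g − (-1)^{(m+1)(n+1)} g ∪_π f`
(paper degrees `m+1`, `n+1`). -/
def cupBracket (π : Q 1) {m n : ℕ} (f : Q m) (g : Q n) : Q (m + n + 1) :=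
  O.cup π f g - ((-1 : k) ^ ((m + 1) * (n + 1))) •
    tr (by omega : n + m + 1 = m + n + 1) (O.cup π g f)

/-- The Frölicher–Nijenhuis bracket
`[f,g]_FN := [f,g]_π + (-1)^{m+1} ι_{δ_π f} g − (-1)^{(m+2)(n+1)} ι_{δ_π g} f`
(paper degrees `m+1`, `n+1`). -/
def fn (π : Q 1) {m n : ℕ} (f : Q m) (g : Q n) : Q (m + n + 1) :=
  O.cupBracket π f g
    + ((-1 : k) ^ (m + 1)) •
        tr (by omega : n + (m + 1) = m + n + 1) (O.iota (O.delta π f) g)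
    - ((-1 : k) ^ ((m + 2) * (n + 1))) •
        tr (by omega : m + (n + 1) = m + n + 1) (O.iota (O.delta π g) f)

/-- The derived bracket
`[f,g]_D := [f,g]_π + ι_{θ f} g − (-1)^{(m+1)(n+1)} ι_{θ g} f`. -/
def derived (π : Q 1) {m n : ℕ} (f : Q m) (g : Q n) : Q (m + n + 1) :=
  O.cupBracket π f g
    + tr (by omega : n + (m + 1) = m + n + 1) (O.iota (O.theta π f) g)
    - ((-1 : k) ^ ((m + 1) * (n + 1))) •
        tr (by omega : m + (n + 1) = m + n + 1) (O.iota (O.theta π g) f)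

/-- The deformed element `π_S := π ∘₁ S + π ∘₂ S − S ∘₁ π` for `S ∈ P_1`. -/
def piDef (π : Q 1) (S : Q 0) : Q 1 :=
  O.comp rfl π 0 S + O.comp rfl π 1 S - O.comp rfl S 0 π

/-- `S ∈ P_1` is a Nijenhuis element for the multiplication `π`:
`(π ∘₂ S) ∘₁ S = S ∘₁ (π ∘₁ S + π ∘₂ S − S ∘₁ π)`. -/
def IsNijenhuisFor (π : Q 1) (S : Q 0) : Prop :=
  O.comp rfl (O.comp rfl π 1 S) 0 S = O.comp rfl S 0 (O.piDef π S)

/-- Powers `N^j := N ∘₁ N^{j-1}`, `N^0 = 𝟙`. -/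
def Npow (N : Q 0) : ℕ → Q 0
  | 0 => O.one
  | (j + 1) => O.comp (rfl : (0 : ℕ) + 0 = 0) N 0 (Npow N j)

/-- `R ∈ P_1` is a Rota–Baxter element of weight `lam`:
`(π ∘₂ R) ∘₁ R = R ∘₁ (π ∘₁ R + π ∘₂ R + lam π)`. -/
def IsRB (π : Q 1) (lam : k) (R : Q 0) : Prop :=
  O.comp rfl (O.comp rfl π 1 R) 0 R =
    O.comp rfl R 0 (O.comp rfl π 0 R + O.comp rfl π 1 R + lam • π)

/-- `r ∈ P_1` is an averaging element:
`(π ∘₂ r) ∘₁ r = r ∘₁ (π ∘₁ r) = r ∘₁ (π ∘₂ r)`. -/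
def IsAvg (π : Q 1) (r : Q 0) : Prop :=
  O.comp rfl (O.comp rfl π 1 r) 0 r = O.comp rfl r 0 (O.comp rfl π 0 r) ∧
  O.comp rfl (O.comp rfl π 1 r) 0 r = O.comp rfl r 0 (O.comp rfl π 1 r)

end NSOperad

/-!
`ι` is the graded pre-Lie product of the operad: its associator
`ι_f ι_g φ − ι_{ι_f g} φ` collects the terms of `ι_f ι_g φ` in which `f` and `g` sit in
disjoint slots of `φ`, and parallel associativity identifies these with the corresponding terms
of `ι_g ι_f φ` up to the sign `(-1)^{ab}`. Hence the associator is graded symmetric, which says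
exactly that `f ↦ ι_f` turns the GV bracket, the graded commutator of `ι`, into the commutator
of operators. For the cup bracket, the slots of `(π ∘₂ ψ) ∘₁ φ` are those of `φ` followed by
those of `ψ`, so by sequential and parallel associativity `ι_f` inserts `f` either into `φ` or
into `ψ`, and `ι_f` is a graded derivation of `∪_π`, hence of its graded commutator.
-/

namespace NSOperad

open Finset

lemma neg_one_pow_add_two_mul {R : Type*} [Monoid R] [HasDistribNeg R] (x y : ℕ) :
    (-1 : R) ^ (x + 2 * y) = (-1) ^ x := by
  rw [pow_add, pow_mul, neg_one_sq, one_pow, mul_one]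

section Transport

variable {Q : ℕ → Type*}

@[simp] lemma tr_rfl {m : ℕ} (x : Q m) : tr rfl x = x := rfl

@[simp] lemma tr_tr {i j l : ℕ} (h : i = j) (h' : j = l) (x : Q i) :
    tr h' (tr h x) = tr (h.trans h') x := by
  subst h h'; rfl

variable [∀ n, AddCommGroup (Q n)]

lemma tr_sub {i j : ℕ} (h : i = j) (x y : Q i) : tr h (x - y) = tr h x - tr h y := by
  subst h; rfl

lemma tr_smul {k : Type*} [Semiring k] [∀ n, Module k (Q n)] {i j : ℕ} (h : i = j) (a : k)
    (x : Q i) : tr h (a • x) = a • tr h x := by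
  subst h; rfl

end Transport

variable {k : Type*} [Field k] {Q : ℕ → Type*} [∀ n, AddCommGroup (Q n)] [∀ n, Module k (Q n)]
  (O : NSOperad k Q)

/-- Partial composition at a position `i : ℕ`, as a bilinear map, so that sums over positions
can be reindexed in `ℕ`; it is `0` when `i` is out of range. -/
def compAt {m n p : ℕ} (h : m + n = p) (i : ℕ) : Q m →ₗ[k] Q n →ₗ[k] Q p :=
  if hi : i < m + 1 then
    LinearMap.mk₂ k (fun f g => O.comp h f ⟨i, hi⟩ g) (fun f f' g => O.comp_add_left h f f' _ g)
      (fun a f g => O.comp_smul_left h a f _ g) (fun f g g' => O.comp_add_right h f _ g g')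
      (fun a f g => O.comp_smul_right h a f _ g)
  else 0

lemma compAt_of_lt {m n p : ℕ} (h : m + n = p) {i : ℕ} (hi : i < m + 1) (f : Q m) (g : Q n) :
    O.compAt h i f g = O.comp h f ⟨i, hi⟩ g := by
  simp [compAt, hi]

lemma compAt_assoc_seq {m n l q r p : ℕ} (h₀ : n + l = q) (h₁ : m + q = p) (h₂ : m + n = r)
    (h₃ : r + l = p) (f : Q m) (g : Q n) (x : Q l) {i j : ℕ} (hi : i ≤ m) (hj : j ≤ n) :
    O.compAt h₁ i f (O.compAt h₀ j g x) = O.compAt h₃ (i + j) (O.compAt h₂ i f g) x := by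
  rw [O.compAt_of_lt h₀ (by omega), O.compAt_of_lt h₁ (by omega), O.compAt_of_lt h₂ (by omega),
    O.compAt_of_lt h₃ (by omega)]
  exact O.assoc_seq h₀ h₁ h₂ h₃ f g x ⟨i, by omega⟩ ⟨j, by omega⟩

lemma compAt_assoc_par {m n l r s p : ℕ} (h₂ : m + n = r) (h₃ : r + l = p) (h₄ : m + l = s)
    (h₅ : s + n = p) (f : Q m) (g : Q n) (x : Q l) {i j : ℕ} (hij : i < j) (hj : j ≤ m) :
    O.compAt h₃ (j + n) (O.compAt h₂ i f g) x = O.compAt h₅ i (O.compAt h₄ j f x) g := by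
  rw [O.compAt_of_lt h₂ (by omega), O.compAt_of_lt h₃ (by omega), O.compAt_of_lt h₄ (by omega),
    O.compAt_of_lt h₅ (by omega)]
  exact O.assoc_par h₂ h₃ h₄ h₅ f g x ⟨i, by omega⟩ ⟨j, by omega⟩ hij

lemma tr_iota {m n p : ℕ} (h : m + n = p) (g : Q n) (f : Q m) :
    tr h (O.iota g f) = ∑ i ∈ range (m + 1), (-1 : k) ^ (i * n) • O.compAt h i f g := by
  subst h
  rw [tr_rfl, iota, ← Fin.sum_univ_eq_sum_range (fun i => (-1 : k) ^ (i * n) • O.compAt rfl i f g)]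
  simp only [O.compAt_of_lt rfl (Fin.is_lt _)]

lemma iota_eq_sum {m n : ℕ} (g : Q n) (f : Q m) :
    O.iota g f = ∑ i ∈ range (m + 1), (-1 : k) ^ (i * n) • O.compAt rfl i f g :=
  O.tr_iota rfl g f

lemma iota_sub_left {m n : ℕ} (g g' : Q n) (f : Q m) :
    O.iota (g - g') f = O.iota g f - O.iota g' f := by
  simp only [iota_eq_sum, map_sub, smul_sub, sum_sub_distrib]

lemma iota_sub_right {m n : ℕ} (g : Q n) (f f' : Q m) :
    O.iota g (f - f') = O.iota g f - O.iota g f' := by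
  simp only [iota_eq_sum, map_sub, LinearMap.sub_apply, smul_sub, sum_sub_distrib]

lemma iota_smul_left {m n : ℕ} (a : k) (g : Q n) (f : Q m) :
    O.iota (a • g) f = a • O.iota g f := by
  simp only [iota_eq_sum, map_smul, smul_sum, smul_comm a]

lemma iota_smul_right {m n : ℕ} (a : k) (g : Q n) (f : Q m) :
    O.iota g (a • f) = a • O.iota g f := by
  simp only [iota_eq_sum, map_smul, LinearMap.smul_apply, smul_sum, smul_comm a]

lemma iota_tr_left {m n n' : ℕ} (h : n = n') (g : Q n) (f : Q m) :
    O.iota (tr h g) f = tr (by rw [h]) (O.iota g f) := by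
  subst h; rfl

lemma iota_tr_right {m m' n : ℕ} (h : m = m') (g : Q n) (f : Q m) :
    O.iota g (tr h f) = tr (by rw [h]) (O.iota g f) := by
  subst h; rfl

section PreLie

variable {a b c p : ℕ}

def iotaAssoc (f : Q a) (g : Q b) (φ : Q c) : Q (c + b + a) :=
  O.iota f (O.iota g φ) - tr (by omega) (O.iota (O.iota f g) φ)

/-- The terms `± (φ ∘ᵢ g) ∘ⱼ f` of `ι_f ι_g φ` in which `f` lands in a slot of `φ` left of `g`
(`j < i`); `parallelRight` collects those right of `g` (`j > i + b`). -/
def parallelLeft (h : c + b + a = p) (f : Q a) (g : Q b) (φ : Q c) : Q p :=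
  ∑ i ∈ range (c + 1), ∑ j ∈ range i,
    (-1 : k) ^ (j * a + i * b) • O.compAt h j (O.compAt rfl i φ g) f

def parallelRight (h : c + b + a = p) (f : Q a) (g : Q b) (φ : Q c) : Q p :=
  ∑ i ∈ range (c + 1), ∑ j ∈ Ico (i + b + 1) (c + b + 1),
    (-1 : k) ^ (j * a + i * b) • O.compAt h j (O.compAt rfl i φ g) f

lemma tr_iota_iota (h : c + b + a = p) (f : Q a) (g : Q b) (φ : Q c) :
    tr h (O.iota f (O.iota g φ)) = ∑ i ∈ range (c + 1), ∑ j ∈ range (c + b + 1),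
      (-1 : k) ^ (j * a + i * b) • O.compAt h j (O.compAt rfl i φ g) f := by
  rw [O.tr_iota h, sum_comm]
  refine sum_congr rfl fun j _ => ?_
  rw [iota_eq_sum, map_sum, LinearMap.sum_apply, smul_sum]
  refine sum_congr rfl fun i _ => ?_
  rw [map_smul, LinearMap.smul_apply, smul_smul, ← pow_add]

lemma tr_iota_iota_nested (h : c + (b + a) = p) (f : Q a) (g : Q b) (φ : Q c) :
    tr h (O.iota (O.iota f g) φ) = ∑ i ∈ range (c + 1), ∑ j ∈ Ico i (i + b + 1),
      (-1 : k) ^ (j * a + i * b) • O.compAt (by omega) j (O.compAt rfl i φ g) f := by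
  rw [O.tr_iota h]
  refine sum_congr rfl fun i hi => ?_
  rw [iota_eq_sum, map_sum, smul_sum, sum_Ico_eq_sum_range, show i + b + 1 - i = b + 1 by omega]
  refine sum_congr rfl fun t ht => ?_
  rw [map_smul, smul_smul, ← pow_add,
    O.compAt_assoc_seq rfl h rfl (by omega) φ g f (mem_range_succ_iff.mp hi)
      (mem_range_succ_iff.mp ht)]
  congr 2
  ring

lemma tr_iotaAssoc (h : c + b + a = p) (f : Q a) (g : Q b) (φ : Q c) :
    tr h (O.iotaAssoc f g φ) = O.parallelLeft h f g φ + O.parallelRight h f g φ := by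
  rw [iotaAssoc, tr_sub, tr_tr, O.tr_iota_iota h, O.tr_iota_iota_nested, parallelLeft,
    parallelRight, ← sum_sub_distrib, ← sum_add_distrib]
  refine sum_congr rfl fun i hi => ?_
  have hi : i ≤ c := mem_range_succ_iff.mp hi
  rw [← sum_range_add_sum_Ico _ (show i ≤ c + b + 1 by omega),
    ← sum_Ico_consecutive _ (show i ≤ i + b + 1 by omega) (show i + b + 1 ≤ c + b + 1 by omega)]
  abel

lemma parallelLeft_eq (h : c + b + a = p) (h' : c + a + b = p) (f : Q a) (g : Q b) (φ : Q c) :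
    O.parallelLeft h f g φ = (-1 : k) ^ (a * b) • O.parallelRight h' g f φ := by
  rw [parallelLeft, parallelRight, smul_sum,
    sum_comm' (t' := range (c + 1)) (s' := fun j => Ico (j + 1) (c + 1))
      (by intros; simp only [mem_range, mem_Ico]; omega)]
  refine sum_congr rfl fun j _ => ?_
  rw [show Ico (j + a + 1) (c + a + 1) = Ico (j + 1 + a) (c + 1 + a) by
    rw [add_right_comm j, add_right_comm c], ← sum_Ico_add' _ (j + 1) (c + 1) a, smul_sum]
  refine sum_congr rfl fun i hi => ?_
  obtain ⟨hji, hic⟩ := mem_Ico.mp hi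
  rw [O.compAt_assoc_par rfl h' rfl h φ f g hji (Nat.le_of_lt_succ hic), smul_smul, ← pow_add,
    show a * b + ((i + a) * b + j * a) = (j * a + i * b) + 2 * (a * b) by ring,
    neg_one_pow_add_two_mul]

lemma tr_iotaAssoc_comm (h : c + b + a = p) (h' : c + a + b = p) (f : Q a) (g : Q b) (φ : Q c) :
    tr h (O.iotaAssoc f g φ) = (-1 : k) ^ (a * b) • tr h' (O.iotaAssoc g f φ) := by
  rw [O.tr_iotaAssoc h, O.tr_iotaAssoc h', O.parallelLeft_eq h h', O.parallelLeft_eq h' h,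
    mul_comm b a, smul_add, smul_smul, ← mul_pow, neg_one_mul, neg_neg, one_pow, one_smul,
    add_comm]

lemma tr_iota_gv (h : c + (a + b) = p) (h₁ : c + b + a = p) (h₂ : c + a + b = p)
    (f : Q a) (g : Q b) (φ : Q c) :
    tr h (O.iota (O.gv f g) φ) =
      tr h₁ (O.iota f (O.iota g φ)) - (-1 : k) ^ (a * b) • tr h₂ (O.iota g (O.iota f φ)) := by
  have hcomm := O.tr_iotaAssoc_comm h₁ h₂ f g φ
  simp only [iotaAssoc, tr_sub, tr_tr] at hcomm
  simp only [gv, iota_sub_left, iota_smul_left, iota_tr_left, tr_sub, tr_smul, tr_tr]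
  linear_combination (norm := module) -hcomm

end PreLie

section Cup

variable {a c d p : ℕ}

lemma tr_cup (π : Q 1) (φ : Q c) (ψ : Q d) (h : c + d + 1 = p) :
    tr h (O.cup π φ ψ) = O.compAt (by omega : 1 + d + c = p) 0 (O.compAt rfl 1 π ψ) φ := by
  subst h
  rw [tr_rfl, cup, O.compAt_of_lt _ (by omega), O.compAt_of_lt _ (by omega)]
  rfl

lemma tr_iota_cup (π : Q 1) (f : Q a) (φ : Q c) (ψ : Q d) (h : c + d + 1 + a = p)
    (h₁ : c + a + d + 1 = p) (h₂ : c + (d + a) + 1 = p) :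
    tr h (O.iota f (O.cup π φ ψ)) =
      tr h₁ (O.cup π (O.iota f φ) ψ) +
        (-1 : k) ^ ((c + 1) * a) • tr h₂ (O.cup π φ (O.iota f ψ)) := by
  have hcup : O.cup π φ ψ = O.compAt (by omega) 0 (O.compAt rfl 1 π ψ) φ := O.tr_cup π φ ψ rfl
  have hφ : ∑ j ∈ range (c + 1), (-1 : k) ^ (j * a) • O.compAt h j (O.cup π φ ψ) f =
      tr h₁ (O.cup π (O.iota f φ) ψ) := by
    rw [O.tr_cup π _ ψ h₁, iota_eq_sum, map_sum]
    refine sum_congr rfl fun j hj => ?_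
    rw [map_smul, hcup,
      O.compAt_assoc_seq rfl _ _ h _ φ f (Nat.zero_le _) (mem_range_succ_iff.mp hj), Nat.zero_add]
  have hψ : ∑ j ∈ Ico (c + 1) (c + d + 1 + 1), (-1 : k) ^ (j * a) • O.compAt h j (O.cup π φ ψ) f =
      (-1 : k) ^ ((c + 1) * a) • tr h₂ (O.cup π φ (O.iota f ψ)) := by
    rw [O.tr_cup π φ _ h₂, iota_eq_sum, map_sum, map_sum, LinearMap.sum_apply, smul_sum,
      sum_Ico_eq_sum_range, show c + d + 1 + 1 - (c + 1) = d + 1 by omega]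
    refine sum_congr rfl fun t ht => ?_
    rw [map_smul, map_smul, LinearMap.smul_apply, smul_smul, ← pow_add, hcup,
      show c + 1 + t = 1 + t + c by omega,
      O.compAt_assoc_par _ h (show 1 + d + a = 1 + (d + a) by omega) (by omega) _ φ f
        (show 0 < 1 + t by omega) (by have := mem_range_succ_iff.mp ht; omega),
      ← O.compAt_assoc_seq rfl rfl rfl _ π ψ f le_rfl (mem_range_succ_iff.mp ht)]
    congr 2
    ring
  rw [O.tr_iota h, ← sum_range_add_sum_Ico _ (show c + 1 ≤ c + d + 1 + 1 by omega), hφ, hψ]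

lemma tr_iota_cupBracket (π : Q 1) (f : Q a) (φ : Q c) (ψ : Q d) (h : c + d + 1 + a = p)
    (h₁ : c + a + d + 1 = p) (h₂ : c + (d + a) + 1 = p) :
    tr h (O.iota f (O.cupBracket π φ ψ)) =
      tr h₁ (O.cupBracket π (O.iota f φ) ψ) +
        (-1 : k) ^ (a * (c + 1)) • tr h₂ (O.cupBracket π φ (O.iota f ψ)) := by
  simp only [cupBracket, iota_sub_right, iota_smul_right, iota_tr_right, tr_sub, tr_smul, tr_tr]
  rw [O.tr_iota_cup π f φ ψ h h₁ h₂, O.tr_iota_cup π f ψ φ (by omega) (by omega) (by omega)]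
  rw [smul_add, smul_sub, smul_smul, smul_smul, ← pow_add, ← pow_add,
    show (c + 1) * (d + 1) + (d + 1) * a = (c + a + 1) * (d + 1) by ring,
    show a * (c + 1) + (c + 1) * (d + a + 1) = (c + 1) * (d + 1) + 2 * (a * (c + 1)) by ring,
    neg_one_pow_add_two_mul, mul_comm (c + 1) a]
  abel

end Cup

end NSOperad

open NSOperad

theorem gv_action_on_cup_lie_algebra {k : Type*} [Field k] {Q : ℕ → Type*}
    [∀ n, AddCommGroup (Q n)] [∀ n, Module k (Q n)] (O : NSOperad k Q)
    (π : Q 1) :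
    (∀ (a b c : ℕ) (f : Q a) (g : Q b) (φ : Q c),
      tr (by omega : c + (a + b) = a + b + c) (O.iota (O.gv f g) φ) =
        tr (by omega : c + b + a = a + b + c) (O.iota f (O.iota g φ)) -
          ((-1 : k) ^ (a * b)) •
            tr (by omega : c + a + b = a + b + c) (O.iota g (O.iota f φ))) ∧
    (∀ (a c d : ℕ) (f : Q a) (φ : Q c) (ψ : Q d),
      tr (by omega : c + d + 1 + a = a + c + d + 1) (O.iota f (O.cupBracket π φ ψ)) =
        tr (by omega : c + a + d + 1 = a + c + d + 1) (O.cupBracket π (O.iota f φ) ψ) +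
          ((-1 : k) ^ (a * (c + 1))) •
            tr (by omega : c + (d + a) + 1 = a + c + d + 1)
              (O.cupBracket π φ (O.iota f ψ))) :=
  ⟨fun _ _ _ f g φ => O.tr_iota_gv _ _ _ f g φ,
    fun _ _ _ f φ ψ => O.tr_iota_cupBracket π f φ ψ _ _ _⟩
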